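/- arXiv:2104.00105 — 3 statements merged into one kernel-verified Lean document; each statement's English description precedes it below -/
import Mathlib

section
/- Let F_▲(x) = 2·max{1 − 2|x|, 0} be the triangle function (so ‖F_▲‖_{L¹(ℝ)} = 1). Then the global maximum of 𝓗(F_▲) on (0,∞) is attained at x = 1/(2√2), and ‖𝓗(F_▲)‖_{L∞(ℝ)} = 𝓗(F_▲)(1/(2√2)) = (4/π)·log(1 + √2). -/
open MeasureTheory Filter

/-- The principal-value Hilbert transform of `F` at `x` exists and equals `L`:
`𝓗(F)(x) = lim_{ε→0⁺} (1/π)·∫_{|t|≥ε} F(x−t)/t dt`. -/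
def pvHilbAt (F : ℝ → ℝ) (x L : ℝ) : Prop :=
  Tendsto (fun ε : ℝ => (1 / Real.pi) * ∫ t in {t : ℝ | ε ≤ |t|}, F (x - t) / t)
    (nhdsWithin 0 (Set.Ioi 0)) (nhds L)

/-- The class `𝒜*`: `F ∈ L¹(ℝ)`, `F ≥ 0` a.e., support contained in `[-1/2,1/2]`. -/
def memAstar (F : ℝ → ℝ) : Prop :=
  Integrable F ∧ (∀ᵐ x ∂(volume : Measure ℝ), 0 ≤ F x) ∧
    ∀ᵐ x ∂(volume : Measure ℝ), x ∉ Set.Icc (-(1/2) : ℝ) (1/2) → F x = 0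

/-- The triangle function `F_▲(x) = 2·max{1 − 2|x|, 0}`, of unit `L¹`-norm. -/
noncomputable def Ftri (x : ℝ) : ℝ := 2 * max (1 - 2 * |x|) 0

/-!
For `x > 0` and small `ε`, the truncated integral `∫_{|t| ≥ ε} F_▲(x - t) / t dt` splits into
pieces on which `F_▲(x - t)` is affine in `t`, and sums to `4 g(x) - c ε` with
`g(x) = φ(x + 1/2) + φ(x - 1/2) - 2 φ(x)`, `φ(t) = t log |t|`, and `c = 8, 4, 0` as `x <, =, > 1/2`.
Hence `𝓗(F_▲) = (4/π) g` on `(0, ∞)`. Since `g'(x) = log (|x² - 1/4| / x²)`, `g` increases on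
`[0, 1/(2√2)]` and decreases afterwards; it is nonnegative because `g(0) = 0` and, for `x ≥ 1/2`,
`φ` is convex on `[0, ∞)`. Finally `F_▲` is even, so `𝓗(F_▲)` is odd, which gives the sup norm.
-/

open Real Set
open scoped Interval Topology

noncomputable def truncHilb (F : ℝ → ℝ) (x ε : ℝ) : ℝ :=
  ∫ t in {t : ℝ | ε ≤ |t|}, F (x - t) / t

section PrincipalValue

variable {F : ℝ → ℝ}

lemma truncHilb_neg_of_even (hF : ∀ y, F (-y) = F y) (x ε : ℝ) :
    truncHilb F (-x) ε = -truncHilb F x ε := by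
  have hS : MeasurableSet {t : ℝ | ε ≤ |t|} :=
    measurableSet_le measurable_const measurable_abs
  have hreflect : {t : ℝ | ε ≤ |t|}.indicator (fun t => F (-x - t) / t) =
      fun t => {t : ℝ | ε ≤ |t|}.indicator (fun t => -(F (x - t) / t)) (-t) := by
    ext t
    by_cases ht : t ∈ {t : ℝ | ε ≤ |t|}
    · have ht' : -t ∈ {t : ℝ | ε ≤ |t|} := by simpa using ht
      rw [indicator_of_mem ht, indicator_of_mem ht', ← hF, div_neg, neg_neg]
      ring_nf
    · have ht' : -t ∉ {t : ℝ | ε ≤ |t|} := by simpa using ht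
      rw [indicator_of_notMem ht, indicator_of_notMem ht']
  unfold truncHilb
  rw [← integral_indicator hS, hreflect, integral_neg_eq_self (fun t =>
    {t : ℝ | ε ≤ |t|}.indicator (fun t => -(F (x - t) / t)) t), integral_indicator hS,
    integral_neg]

lemma pvHilbAt_neg_of_even (hF : ∀ y, F (-y) = F y) {x L : ℝ} (h : pvHilbAt F x L) :
    pvHilbAt F (-x) (-L) := by
  refine h.neg.congr fun ε => ?_
  change -(1 / π * truncHilb F x ε) = 1 / π * truncHilb F (-x) ε
  rw [truncHilb_neg_of_even hF]
  ring

lemma pvHilbAt_of_truncHilb_eq {x A c : ℝ}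
    (h : ∀ᶠ ε in 𝓝[>] 0, truncHilb F x ε = A - c * ε) : pvHilbAt F x (A / π) := by
  have hlim : Tendsto (fun ε : ℝ => 1 / π * (A - c * ε)) (𝓝[>] 0) (𝓝 (A / π)) := by
    have : Continuous fun ε : ℝ => 1 / π * (A - c * ε) := by fun_prop
    simpa [div_eq_inv_mul] using (this.tendsto 0).mono_left nhdsWithin_le_nhds
  refine hlim.congr' ?_
  filter_upwards [h] with ε hε
  rw [← hε]
  rfl

lemma setIntegral_le_abs_eq_intervalIntegral {f : ℝ → ℝ} {a b ε : ℝ}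
    (hf : ContinuousOn f {0}ᶜ) (ha : ∀ t ≤ a, f t = 0) (hb : ∀ t, b ≤ t → f t = 0)
    (hε : 0 < ε) (haε : a ≤ -ε) (hεb : ε ≤ b) :
    ∫ t in {t : ℝ | ε ≤ |t|}, f t = (∫ t in a..-ε, f t) + ∫ t in ε..b, f t := by
  have hsub : Icc a (-ε) ∪ Icc ε b ⊆ {t : ℝ | ε ≤ |t|} := by
    rintro t (ht | ht)
    · exact le_abs.2 (Or.inr (by linarith [ht.2] : ε ≤ -t))
    · exact le_abs.2 (Or.inl ht.1)
  have hvanish : ∀ t ∈ {t : ℝ | ε ≤ |t|} \ (Icc a (-ε) ∪ Icc ε b), f t = 0 := by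
    rintro t ⟨ht, hts⟩
    simp only [mem_union, mem_Icc, not_or, not_and_or, not_le] at hts
    rcases le_abs'.1 (show ε ≤ |t| from ht) with ht | ht
    · exact ha t (by rcases hts.1 with h | h <;> linarith)
    · exact hb t (by rcases hts.2 with h | h <;> linarith)
  have hint : ∀ p q : ℝ, (0 : ℝ) ∉ Icc p q → IntegrableOn f (Icc p q) := fun p q h0 =>
    (hf.mono fun t ht (h : t = 0) => h0 (h ▸ ht)).integrableOn_Icc
  rw [setIntegral_eq_of_subset_of_forall_sdiff_eq_zero
      (measurableSet_le measurable_const measurable_abs) hsub hvanish,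
    setIntegral_union (disjoint_left.2 fun t h₁ h₂ => by linarith [h₁.2, h₂.1]) measurableSet_Icc
      (hint _ _ (notMem_Icc_of_gt (by linarith))) (hint _ _ (notMem_Icc_of_lt hε)),
    intervalIntegral.integral_of_le haε, intervalIntegral.integral_of_le hεb,
    integral_Icc_eq_integral_Ioc, integral_Icc_eq_integral_Ioc]

end PrincipalValue

lemma integral_div_self_of_eqOn_affine {f : ℝ → ℝ} {p q c d : ℝ} (h0 : (0 : ℝ) ∉ [[p, q]])
    (hf : EqOn f (fun t => c + d * t) [[p, q]]) :
    ∫ t in p..q, f t / t = c * (log q - log p) + d * (q - p) := by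
  have hne : ∀ t ∈ [[p, q]], t ≠ 0 := fun t ht h => h0 (h ▸ ht)
  have hinv : IntervalIntegrable (fun t : ℝ => t⁻¹) volume p q :=
    (continuousOn_inv₀.mono fun t ht => hne t ht).intervalIntegrable
  rw [intervalIntegral.integral_congr (g := fun t => c * t⁻¹ + d) fun t ht => by
      simp only [hf ht]; field_simp [hne t ht],
    intervalIntegral.integral_add (hinv.const_mul c) intervalIntegrable_const,
    intervalIntegral.integral_const_mul, integral_inv h0, intervalIntegral.integral_const,
    smul_eq_mul, log_div (hne q right_mem_uIcc) (hne p left_mem_uIcc)]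
  ring

section Triangle

lemma Ftri_neg (y : ℝ) : Ftri (-y) = Ftri y := by rw [Ftri, Ftri, abs_neg]

lemma continuous_Ftri : Continuous Ftri := by unfold Ftri; fun_prop

lemma Ftri_eq_zero {y : ℝ} (hy : 1/2 ≤ |y|) : Ftri y = 0 := by
  rw [Ftri, max_eq_right (by linarith)]; ring

lemma Ftri_sub_of_le_of_le {x t : ℝ} (h₁ : x - 1/2 ≤ t) (h₂ : t ≤ x) :
    Ftri (x - t) = (2 - 4 * x) + 4 * t := by
  rw [Ftri, abs_of_nonneg (by linarith), max_eq_left (by linarith)]; ring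

lemma Ftri_sub_of_ge_of_le {x t : ℝ} (h₁ : x ≤ t) (h₂ : t ≤ x + 1/2) :
    Ftri (x - t) = (2 + 4 * x) + -4 * t := by
  rw [Ftri, abs_of_nonpos (by linarith), max_eq_left (by linarith)]; ring

variable {x p q : ℝ}

lemma continuousOn_Ftri_sub_div (x : ℝ) : ContinuousOn (fun t => Ftri (x - t) / t) {0}ᶜ :=
  (continuous_Ftri.comp (continuous_sub_left x)).continuousOn.div continuousOn_id
    fun _ ht => ht

lemma intervalIntegrable_Ftri_sub_div (hp : 0 < p) (hq : 0 < q) :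
    IntervalIntegrable (fun t => Ftri (x - t) / t) volume p q :=
  ((continuousOn_Ftri_sub_div x).mono fun _ ht h =>
    (lt_inf_iff.2 ⟨hp, hq⟩).not_ge (h ▸ ht.1)).intervalIntegrable

lemma integral_Ftri_sub_div_left (hpq : p ≤ q) (h0 : (0 : ℝ) ∉ Icc p q) (hp : x - 1/2 ≤ p)
    (hq : q ≤ x) :
    ∫ t in p..q, Ftri (x - t) / t = (2 - 4 * x) * (log q - log p) + 4 * (q - p) := by
  rw [← uIcc_of_le hpq] at h0
  exact integral_div_self_of_eqOn_affine h0 fun t ht => by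
    rw [uIcc_of_le hpq] at ht
    exact Ftri_sub_of_le_of_le (by linarith [ht.1]) (by linarith [ht.2])

lemma integral_Ftri_sub_div_right (hpq : p ≤ q) (h0 : (0 : ℝ) ∉ Icc p q) (hp : x ≤ p)
    (hq : q ≤ x + 1/2) :
    ∫ t in p..q, Ftri (x - t) / t = (2 + 4 * x) * (log q - log p) + -4 * (q - p) := by
  rw [← uIcc_of_le hpq] at h0
  exact integral_div_self_of_eqOn_affine h0 fun t ht => by
    rw [uIcc_of_le hpq] at ht
    exact Ftri_sub_of_ge_of_le (by linarith [ht.1]) (by linarith [ht.2])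

lemma integral_Ftri_sub_div_of_le (hpq : p ≤ q) (hq : q ≤ x - 1/2) :
    ∫ t in p..q, Ftri (x - t) / t = 0 := by
  rw [intervalIntegral.integral_congr (g := fun _ => 0) fun t ht => by
      rw [uIcc_of_le hpq] at ht
      rw [Ftri_eq_zero (by rw [abs_of_nonneg (by linarith [ht.2])]; linarith [ht.2]), zero_div],
    intervalIntegral.integral_zero]

lemma truncHilb_Ftri_eq (x : ℝ) {a b ε : ℝ} (hε : 0 < ε) (ha : a ≤ min (-ε) (x - 1/2))
    (hb : max ε (x + 1/2) ≤ b) :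
    truncHilb Ftri x ε = (∫ t in a..-ε, Ftri (x - t) / t) + ∫ t in ε..b, Ftri (x - t) / t := by
  rw [le_min_iff] at ha
  rw [max_le_iff] at hb
  refine setIntegral_le_abs_eq_intervalIntegral (continuousOn_Ftri_sub_div x) (fun t ht => ?_)
    (fun t ht => ?_) hε ha.1 hb.1
  · rw [Ftri_eq_zero (by rw [abs_of_nonneg (by linarith)]; linarith), zero_div]
  · rw [Ftri_eq_zero (by rw [abs_of_nonpos (by linarith)]; linarith), zero_div]

end Triangle

-- `Real.log` is `log |·|`: for `x < 1/2` the middle term is `(x - 1/2) log |x - 1/2|`.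
noncomputable def triHilbertProfile (x : ℝ) : ℝ :=
  (x + 1/2) * log (x + 1/2) + (x - 1/2) * log (x - 1/2) - 2 * (x * log x)

section Truncation

variable {x ε : ℝ}

lemma truncHilb_Ftri_of_lt_half (hε : 0 < ε) (hεx : ε < x) (hεx' : ε < 1/2 - x) :
    truncHilb Ftri x ε = 4 * triHilbertProfile x - 8 * ε := by
  rw [truncHilb_Ftri_eq x hε (le_min (by linarith) le_rfl) (max_le (by linarith) le_rfl),
    ← intervalIntegral.integral_add_adjacent_intervals (b := x)
      (intervalIntegrable_Ftri_sub_div hε (by linarith))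
      (intervalIntegrable_Ftri_sub_div (by linarith) (by linarith)),
    integral_Ftri_sub_div_left (by linarith) (notMem_Icc_of_gt (by linarith)) le_rfl (by linarith),
    integral_Ftri_sub_div_left hεx.le (notMem_Icc_of_lt hε) (by linarith) le_rfl,
    integral_Ftri_sub_div_right (by linarith) (notMem_Icc_of_lt (by linarith)) le_rfl le_rfl,
    log_neg_eq_log, triHilbertProfile]
  ring

lemma truncHilb_Ftri_half (hε : 0 < ε) (hε' : ε < 1/2) :
    truncHilb Ftri (1/2) ε = 4 * triHilbertProfile (1/2) - 4 * ε := by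
  rw [truncHilb_Ftri_eq (1/2) hε (a := -ε) (le_min le_rfl (by linarith))
      (max_le (by linarith) le_rfl),
    intervalIntegral.integral_same, zero_add,
    ← intervalIntegral.integral_add_adjacent_intervals (b := 1/2)
      (intervalIntegrable_Ftri_sub_div hε (by norm_num))
      (intervalIntegrable_Ftri_sub_div (by norm_num) (by norm_num)),
    integral_Ftri_sub_div_left hε'.le (notMem_Icc_of_lt hε) (by linarith) le_rfl,
    integral_Ftri_sub_div_right (by norm_num) (notMem_Icc_of_lt (by norm_num)) le_rfl le_rfl,
    triHilbertProfile, show (1/2 + 1/2 : ℝ) = 1 by norm_num, log_one]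
  ring

lemma truncHilb_Ftri_of_half_lt (hε : 0 < ε) (hεx : ε < x - 1/2) :
    truncHilb Ftri x ε = 4 * triHilbertProfile x := by
  rw [truncHilb_Ftri_eq x hε (a := -ε) (le_min le_rfl (by linarith))
      (max_le (by linarith) le_rfl),
    intervalIntegral.integral_same, zero_add,
    ← intervalIntegral.integral_add_adjacent_intervals (b := x - 1/2)
      (intervalIntegrable_Ftri_sub_div hε (by linarith))
      (intervalIntegrable_Ftri_sub_div (by linarith) (by linarith)),
    ← intervalIntegral.integral_add_adjacent_intervals (a := x - 1/2) (b := x)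
      (intervalIntegrable_Ftri_sub_div (by linarith) (by linarith))
      (intervalIntegrable_Ftri_sub_div (by linarith) (by linarith)),
    integral_Ftri_sub_div_of_le hεx.le le_rfl,
    integral_Ftri_sub_div_left (by linarith) (notMem_Icc_of_lt (by linarith)) le_rfl le_rfl,
    integral_Ftri_sub_div_right (by linarith) (notMem_Icc_of_lt (by linarith)) le_rfl le_rfl,
    triHilbertProfile]
  ring

lemma pvHilbAt_Ftri (hx : 0 < x) : pvHilbAt Ftri x (4 * triHilbertProfile x / π) := by
  rcases lt_trichotomy x (1/2) with hx' | rfl | hx'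
  · refine pvHilbAt_of_truncHilb_eq (c := 8) ?_
    filter_upwards [Ioo_mem_nhdsGT (lt_min hx (by linarith : 0 < 1/2 - x))] with ε hε
    exact truncHilb_Ftri_of_lt_half hε.1 (hε.2.trans_le (min_le_left _ _))
      (hε.2.trans_le (min_le_right _ _))
  · refine pvHilbAt_of_truncHilb_eq (c := 4) ?_
    filter_upwards [Ioo_mem_nhdsGT hx] with ε hε
    exact truncHilb_Ftri_half hε.1 hε.2
  · refine pvHilbAt_of_truncHilb_eq (c := 0) ?_
    filter_upwards [Ioo_mem_nhdsGT (by linarith : 0 < x - 1/2)] with ε hε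
    rw [truncHilb_Ftri_of_half_lt hε.1 hε.2, zero_mul, sub_zero]

end Truncation

section Profile

variable {x : ℝ}

lemma continuous_triHilbertProfile : Continuous triHilbertProfile := by
  unfold triHilbertProfile
  have := continuous_mul_log
  fun_prop

lemma hasDerivAt_triHilbertProfile (hx : 0 < x) (hx' : x ≠ 1/2) :
    HasDerivAt triHilbertProfile (log |x ^ 2 - 1/4| - log (x ^ 2)) x := by
  have hφ (c : ℝ) (hc : x + c ≠ 0) :
      HasDerivAt (fun y => (y + c) * log (y + c)) (log (x + c) + 1) x := by
    simpa [Function.comp_def] using (hasDerivAt_mul_log hc).comp x ((hasDerivAt_id x).add_const c)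
  have h := ((hφ (1/2) (by linarith)).add (hφ (-(1/2)) (by intro h; apply hx'; linarith))).sub
    ((hasDerivAt_mul_log hx.ne').const_mul 2)
  simp only [← sub_eq_add_neg] at h
  refine h.congr_deriv ?_
  rw [log_abs, show x ^ 2 - 1/4 = (x + 1/2) * (x - 1/2) by ring,
    log_mul (by linarith) (by intro h; apply hx'; linarith), log_pow]
  push_cast
  ring

lemma sq_one_div_two_mul_sqrt_two : (1 / (2 * √2)) ^ 2 = (1/8 : ℝ) := by
  rw [div_pow, mul_pow, sq_sqrt zero_le_two]; norm_num

lemma one_div_two_mul_sqrt_two_pos : (0 : ℝ) < 1 / (2 * √2) := by positivity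

lemma one_div_two_mul_sqrt_two_lt_half : 1 / (2 * √2) < (1/2 : ℝ) := by
  have := sq_one_div_two_mul_sqrt_two
  nlinarith [one_div_two_mul_sqrt_two_pos]

lemma triHilbertProfile_strictMonoOn :
    StrictMonoOn triHilbertProfile (Icc 0 (1 / (2 * √2))) := by
  refine strictMonoOn_of_deriv_pos (convex_Icc _ _) continuous_triHilbertProfile.continuousOn
    fun x hx => ?_
  rw [interior_Icc] at hx
  have hsq : x ^ 2 < 1/8 := by
    rw [← sq_one_div_two_mul_sqrt_two]
    exact pow_lt_pow_left₀ hx.2 hx.1.le two_ne_zero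
  rw [(hasDerivAt_triHilbertProfile hx.1
    (by linarith [hx.2, one_div_two_mul_sqrt_two_lt_half])).deriv, sub_pos]
  exact log_lt_log (pow_pos hx.1 2) (lt_abs.2 (Or.inr (by linarith)))

lemma triHilbertProfile_strictAntiOn :
    StrictAntiOn triHilbertProfile (Ici (1 / (2 * √2))) := by
  have hneg : ∀ x, 1 / (2 * √2) < x → x ≠ 1/2 → deriv triHilbertProfile x < 0 := by
    intro x hx hx'
    have hx0 : 0 < x := one_div_two_mul_sqrt_two_pos.trans hx
    have hsq : 1/8 < x ^ 2 := by
      rw [← sq_one_div_two_mul_sqrt_two]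
      exact pow_lt_pow_left₀ hx one_div_two_mul_sqrt_two_pos.le two_ne_zero
    rw [(hasDerivAt_triHilbertProfile hx0 hx').deriv, sub_neg]
    exact log_lt_log (abs_pos.2 fun h => hx' (by nlinarith))
      (abs_lt.2 ⟨by linarith, by linarith⟩)
  have hcont := continuous_triHilbertProfile.continuousOn (s := Icc (1 / (2 * √2)) (1/2))
  rw [← Icc_union_Ici_eq_Ici one_div_two_mul_sqrt_two_lt_half.le]
  refine StrictAntiOn.union ?_ ?_ (isGreatest_Icc one_div_two_mul_sqrt_two_lt_half.le)
    isLeast_Ici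
  · refine strictAntiOn_of_deriv_neg (convex_Icc _ _) hcont fun x hx => ?_
    rw [interior_Icc] at hx
    exact hneg x hx.1 hx.2.ne
  · refine strictAntiOn_of_deriv_neg (convex_Ici _)
      continuous_triHilbertProfile.continuousOn fun x hx => ?_
    rw [interior_Ici] at hx
    exact hneg x (one_div_two_mul_sqrt_two_lt_half.trans hx) (ne_of_gt hx)

lemma triHilbertProfile_le (hx : 0 ≤ x) :
    triHilbertProfile x ≤ triHilbertProfile (1 / (2 * √2)) := by
  rcases le_total x (1 / (2 * √2)) with h | h
  · exact triHilbertProfile_strictMonoOn.monotoneOn ⟨hx, h⟩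
      ⟨one_div_two_mul_sqrt_two_pos.le, le_rfl⟩ h
  · exact triHilbertProfile_strictAntiOn.antitoneOn (mem_Ici.2 le_rfl) h h

lemma triHilbertProfile_zero : triHilbertProfile 0 = 0 := by
  rw [triHilbertProfile, show (0 : ℝ) - 1/2 = -(0 + 1/2) by ring, log_neg_eq_log]; ring

lemma triHilbertProfile_nonneg_of_half_le (hx : 1/2 ≤ x) : 0 ≤ triHilbertProfile x := by
  have h := convexOn_mul_log.2 (mem_Ici.2 (by linarith : (0 : ℝ) ≤ x - 1/2))
    (mem_Ici.2 (by linarith : (0 : ℝ) ≤ x + 1/2)) (by norm_num : (0 : ℝ) ≤ 1/2)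
    (by norm_num : (0 : ℝ) ≤ 1/2) (by norm_num)
  simp only [smul_eq_mul, show (1/2 : ℝ) * (x - 1/2) + 1/2 * (x + 1/2) = x by ring] at h
  rw [triHilbertProfile]
  linarith

lemma triHilbertProfile_nonneg (hx : 0 ≤ x) : 0 ≤ triHilbertProfile x := by
  rcases le_total x (1 / (2 * √2)) with h | h
  · rw [← triHilbertProfile_zero]
    exact triHilbertProfile_strictMonoOn.monotoneOn ⟨le_rfl, one_div_two_mul_sqrt_two_pos.le⟩
      ⟨hx, h⟩ hx
  rcases le_total x (1/2) with h' | h'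
  · exact (triHilbertProfile_nonneg_of_half_le le_rfl).trans
      (triHilbertProfile_strictAntiOn.antitoneOn h (one_div_two_mul_sqrt_two_lt_half.le) h')
  · exact triHilbertProfile_nonneg_of_half_le h'

lemma triHilbertProfile_one_div_two_mul_sqrt_two :
    triHilbertProfile (1 / (2 * √2)) = log (1 + √2) := by
  obtain ⟨a, ha⟩ : ∃ a : ℝ, a = 1 / (2 * √2) := ⟨_, rfl⟩
  have hpos : 0 < a := ha ▸ one_div_two_mul_sqrt_two_pos
  rw [← ha]
  have hs : √2 ^ 2 = 2 := sq_sqrt zero_le_two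
  have h2a : 2 * a * √2 = 1 := by rw [ha]; field_simp
  have hplus : a + 1/2 = a * (1 + √2) := by linear_combination (-1/2 : ℝ) * h2a
  have hminus : a - 1/2 = -(a * (√2 - 1)) := by linear_combination (1/2 : ℝ) * h2a
  have hconj : log (√2 - 1) = -log (1 + √2) := by
    rw [← log_inv, eq_inv_of_mul_eq_one_left (by linear_combination hs : (√2 - 1) * (1 + √2) = 1)]
  have h1 : 1 < √2 := by nlinarith [sqrt_nonneg 2]
  rw [triHilbertProfile, hplus, hminus, log_neg_eq_log, log_mul hpos.ne' (by positivity),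
    log_mul hpos.ne' (by linarith), hconj]
  linear_combination log (1 + √2) * h2a

end Profile

/-- The global maximum of `𝓗(F_▲)` on `(0,∞)` is attained at `x = 1/(2√2)`, and
`‖𝓗(F_▲)‖_{L∞(ℝ)} = 𝓗(F_▲)(1/(2√2)) = (4/π)·log(1 + √2)`. -/
theorem stmt12 (G : ℝ → ℝ) (hG : ∀ x : ℝ, pvHilbAt Ftri x (G x)) :
    (∀ x : ℝ, 0 < x → G x ≤ G (1 / (2 * Real.sqrt 2))) ∧
    G (1 / (2 * Real.sqrt 2)) = 4 / Real.pi * Real.log (1 + Real.sqrt 2) ∧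
    (⨆ x : ℝ, |G x|) = 4 / Real.pi * Real.log (1 + Real.sqrt 2) := by
  have hodd (x : ℝ) : G (-x) = -G x :=
    tendsto_nhds_unique (hG (-x)) (pvHilbAt_neg_of_even Ftri_neg (hG x))
  have hzero : G 0 = 0 := by
    have h := hodd 0
    rw [neg_zero] at h
    linarith
  have hprofile (x : ℝ) (hx : 0 ≤ x) : G x = 4 / π * triHilbertProfile x := by
    rcases hx.eq_or_lt with rfl | hx
    · rw [hzero, triHilbertProfile_zero, mul_zero]
    · rw [tendsto_nhds_unique (hG x) (pvHilbAt_Ftri hx)]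
      ring
  have hmax : G (1 / (2 * √2)) = 4 / π * log (1 + √2) := by
    rw [hprofile _ one_div_two_mul_sqrt_two_pos.le, triHilbertProfile_one_div_two_mul_sqrt_two]
  have hbound (x : ℝ) (hx : 0 ≤ x) : 0 ≤ G x ∧ G x ≤ G (1 / (2 * √2)) := by
    rw [hprofile x hx, hprofile _ one_div_two_mul_sqrt_two_pos.le]
    exact ⟨mul_nonneg (by positivity) (triHilbertProfile_nonneg hx),
      by gcongr; exact triHilbertProfile_le hx⟩
  have habs (x : ℝ) : |G x| ≤ G (1 / (2 * √2)) := by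
    rcases le_total 0 x with hx | hx
    · rw [abs_of_nonneg (hbound x hx).1]; exact (hbound x hx).2
    · rw [← neg_neg x, hodd, abs_neg, abs_of_nonneg (hbound (-x) (by linarith)).1]
      exact (hbound (-x) (by linarith)).2
  refine ⟨fun x hx => (hbound x hx.le).2, hmax, ?_⟩
  rw [← hmax]
  exact le_antisymm (ciSup_le habs) <| le_ciSup_of_le ⟨_, forall_mem_range.2 habs⟩ _ (le_abs_self _)
end

section
/- One has ∫₀¹ log⁺|e^{2πiθ} − 1| dθ = (3√3/(4π))·L(2, χ₃), where log⁺ x = max(log x, 0), χ₃ is the nontrivial Dirichlet character modulo 3 (χ₃(n) = 1 if n ≡ 1 (mod 3), χ₃(n) = −1 if n ≡ 2 (mod 3), χ₃(n) = 0 if 3 | n), and L(2, χ₃) = Σ_{n≥1} χ₃(n)/n². Consequently, for P(z) = (z−1)^N one has h(P) = N·(3√3/(4π))·L(2, χ₃). -/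
/-!
On the unit circle `|e^{2πiθ} - 1| = 2|sin πθ|`, which is at least `1` exactly for
`θ ∈ [1/6, 5/6]`; so the integral is `∫_{1/6}^{5/6} log|1 - e^{2πiθ}| dθ`. For `|r| < 1` the
series `log|1 - r e^{2πiθ}| = -∑ rⁿ cos(2πnθ)/n` can be integrated termwise, giving
`∑ sin(πn/3)/(πn²) rⁿ`, and letting `r → 1⁻` (dominated convergence on the left, Abel's theorem on
the right) gives `∑ sin(πn/3)/(πn²)`. Since `sin(πn/3) = (√3/2)(χ₃(n) + 2χ₃(n/2)[2 ∣ n])`, this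
series is `(3√3/(4π)) L(2, χ₃)`. For `(z - 1)^N` use `log⁺ (xᴺ) = N log⁺ x`.
-/

open MeasureTheory

/-- The nontrivial Dirichlet character modulo 3. -/
noncomputable def chi3 (n : ℕ) : ℝ :=
  if n % 3 = 1 then 1 else if n % 3 = 2 then -1 else 0

/-- `L(2, χ₃) = Σ_{n≥1} χ₃(n)/n²`. -/
noncomputable def L2chi3 : ℝ := ∑' n : ℕ, chi3 n / (n : ℝ) ^ 2

open Real Filter Topology Set intervalIntegral

lemma summable_div_sq_of_abs_le_one {f : ℕ → ℝ} (hf : ∀ n, |f n| ≤ 1) :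
    Summable fun n : ℕ => f n / (n : ℝ) ^ 2 := by
  refine (summable_one_div_nat_pow.mpr one_lt_two).of_norm_bounded fun n => ?_
  rw [norm_div, norm_pow, Real.norm_natCast]
  exact div_le_div_of_nonneg_right (hf n) (by positivity)

lemma abs_chi3_le_one (n : ℕ) : |chi3 n| ≤ 1 := by
  unfold chi3; split_ifs <;> norm_num

lemma hasSum_chi3_div_sq : HasSum (fun n : ℕ => chi3 n / (n : ℝ) ^ 2) L2chi3 :=
  (summable_div_sq_of_abs_le_one abs_chi3_le_one).hasSum

lemma hasSum_chi3_half_div_sq :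
    HasSum (fun n : ℕ => (if Even n then chi3 (n / 2) else 0) / (n : ℝ) ^ 2) (L2chi3 / 4) := by
  set f := fun n : ℕ => (if Even n then chi3 (n / 2) else 0) / (n : ℝ) ^ 2
  have heven : HasSum (fun k => f (2 * k)) (L2chi3 / 4) := by
    refine (hasSum_chi3_div_sq.div_const 4).congr_fun fun k => ?_
    simp only [f, even_two_mul, if_true, Nat.mul_div_cancel_left k two_pos]
    push_cast; ring
  have hodd : HasSum (fun k => f (2 * k + 1)) 0 := by
    simp [f, hasSum_zero]
  simpa using heven.even_add_odd hodd

lemma sin_pi_mul_div_three (n : ℕ) :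
    sin (π * n / 3) = √3 / 2 * (chi3 n + 2 * if Even n then chi3 (n / 2) else 0) := by
  have hsin : Function.Periodic (fun n : ℕ => sin (π * n / 3)) 6 := fun n => by
    simp [mul_add, add_div, show π * 6 / 3 = 2 * π by ring]
  have hchi : Function.Periodic chi3 3 := fun n => by simp [chi3]
  have hrhs : Function.Periodic
      (fun n : ℕ => √3 / 2 * (chi3 n + 2 * if Even n then chi3 (n / 2) else 0)) 6 := fun n => by
    have hhalf : (n + 6) / 2 = n / 2 + 3 := by omega
    have hchi6 : chi3 (n + 6) = chi3 n := hchi.nat_mul 2 n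
    simp [hhalf, hchi6, hchi (n / 2), Nat.even_add, parity_simps]
  rw [← hsin.map_mod_nat, ← hrhs.map_mod_nat]
  have h6 : n % 6 < 6 := Nat.mod_lt n (by norm_num)
  have h2 : sin (π * 2 / 3) = √3 / 2 := by
    rw [show π * 2 / 3 = π - π / 3 by ring, sin_pi_sub, sin_pi_div_three]
  have h4 : sin (π * 4 / 3) = -(√3 / 2) := by
    rw [show π * 4 / 3 = π / 3 + π by ring, sin_add_pi, sin_pi_div_three]
  have h5 : sin (π * 5 / 3) = -(√3 / 2) := by
    rw [show π * 5 / 3 = -(π / 3) + 2 * π by ring, sin_add_two_pi, sin_neg, sin_pi_div_three]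
  interval_cases n % 6 <;> norm_num [chi3, Nat.even_iff, h2, h4, h5]

lemma hasSum_sin_pi_mul_div_three_div_sq :
    HasSum (fun n : ℕ => sin (π * n / 3) / (n : ℝ) ^ 2) (3 * √3 / 4 * L2chi3) := by
  have h := (hasSum_chi3_div_sq.add (hasSum_chi3_half_div_sq.mul_left 2)).mul_left (√3 / 2)
  rw [show √3 / 2 * (L2chi3 + 2 * (L2chi3 / 4)) = 3 * √3 / 4 * L2chi3 by ring] at h
  refine h.congr_fun fun n => ?_
  rw [sin_pi_mul_div_three]
  ring

lemma norm_exp_two_pi_I_mul_sub_one (t : ℝ) :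
    ‖Complex.exp (2 * π * Complex.I * t) - 1‖ = 2 * |sin (π * t)| := by
  have h := Complex.norm_exp_I_mul_ofReal_sub_one (2 * π * t)
  rw [show Complex.I * ((2 * π * t : ℝ) : ℂ) = 2 * π * Complex.I * t by push_cast; ring] at h
  rw [h, norm_mul, Real.norm_eq_abs, Real.norm_eq_abs, abs_two, show 2 * π * t / 2 = π * t by ring]

lemma norm_exp_two_pi_I_mul_sub_one_eq_two_mul_cos {t : ℝ} (ht : t ∈ Icc 0 1) :
    ‖Complex.exp (2 * π * Complex.I * t) - 1‖ = 2 * cos |π * t - π / 2| := by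
  have hsin : 0 ≤ sin (π * t) :=
    sin_nonneg_of_nonneg_of_le_pi (by nlinarith [pi_pos, ht.1]) (by nlinarith [pi_pos, ht.2])
  rw [norm_exp_two_pi_I_mul_sub_one, abs_of_nonneg hsin, cos_abs, cos_sub_pi_div_two]

lemma one_le_norm_exp_two_pi_I_mul_sub_one {t : ℝ} (ht : t ∈ Icc (1 / 6) (5 / 6)) :
    1 ≤ ‖Complex.exp (2 * π * Complex.I * t) - 1‖ := by
  have h₁ : π * (1 / 6) ≤ π * t := by gcongr; exact ht.1
  have h₂ : π * t ≤ π * (5 / 6) := by gcongr; exact ht.2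
  rw [norm_exp_two_pi_I_mul_sub_one_eq_two_mul_cos ⟨by linarith [ht.1], by linarith [ht.2]⟩]
  have : cos (π / 3) ≤ cos |π * t - π / 2| :=
    cos_le_cos_of_nonneg_of_le_pi (abs_nonneg _) (by linarith [pi_pos])
      (abs_le.2 ⟨by linarith, by linarith⟩)
  linarith [cos_pi_div_three]

lemma norm_exp_two_pi_I_mul_sub_one_le_one {t : ℝ} (ht : t ∈ Icc 0 (1 / 6) ∪ Icc (5 / 6) 1) :
    ‖Complex.exp (2 * π * Complex.I * t) - 1‖ ≤ 1 := by
  have ht' : t ∈ Icc (0 : ℝ) 1 := by rcases ht with h | h <;> constructor <;> linarith [h.1, h.2]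
  have h₀ : 0 ≤ π * t := by have := ht'.1; positivity
  have h₁ : π * t ≤ π * 1 := by gcongr; exact ht'.2
  have hfar : π / 3 ≤ |π * t - π / 2| := by
    rcases ht with h | h
    · have : π * t ≤ π * (1 / 6) := by gcongr; exact h.2
      rw [abs_of_nonpos (by linarith [pi_pos])]; linarith
    · have : π * (5 / 6) ≤ π * t := by gcongr; exact h.1
      rw [abs_of_nonneg (by linarith [pi_pos])]; linarith
  rw [norm_exp_two_pi_I_mul_sub_one_eq_two_mul_cos ht']
  have : cos |π * t - π / 2| ≤ cos (π / 3) :=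
    cos_le_cos_of_nonneg_of_le_pi (by linarith [pi_pos])
      (abs_le.2 ⟨by linarith [pi_pos], by linarith [pi_pos]⟩) hfar
  linarith [cos_pi_div_three]

lemma integral_posLog_norm_exp_two_pi_I_mul_sub_one :
    ∫ t in (0 : ℝ)..1, log⁺ ‖Complex.exp (2 * π * Complex.I * t) - 1‖ =
      ∫ t in (1 / 6 : ℝ)..(5 / 6), log ‖Complex.exp (2 * π * Complex.I * t) - 1‖ := by
  have hint (a b : ℝ) : IntervalIntegrable
      (fun t : ℝ => log⁺ ‖Complex.exp (2 * π * Complex.I * t) - 1‖) volume a b :=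
    (by fun_prop : Continuous _).intervalIntegrable a b
  have hvanish {a b : ℝ} (hab : Icc a b ⊆ Icc 0 (1 / 6) ∪ Icc (5 / 6) 1) (hle : a ≤ b) :
      ∫ t in a..b, log⁺ ‖Complex.exp (2 * π * Complex.I * t) - 1‖ = 0 := by
    rw [← integral_zero (a := a) (b := b) (μ := volume)]
    refine integral_congr fun t ht => ?_
    rw [uIcc_of_le hle] at ht
    simpa [posLog_eq_zero_iff] using norm_exp_two_pi_I_mul_sub_one_le_one (hab ht)
  rw [← integral_add_adjacent_intervals (hint 0 (1 / 6)) (hint (1 / 6) 1),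
    ← integral_add_adjacent_intervals (hint (1 / 6) (5 / 6)) (hint (5 / 6) 1),
    hvanish (subset_union_left) (by norm_num), hvanish (subset_union_right) (by norm_num),
    zero_add, add_zero]
  refine integral_congr fun t ht => ?_
  rw [uIcc_of_le (by norm_num)] at ht
  exact posLog_eq_log (by simpa using one_le_norm_exp_two_pi_I_mul_sub_one ht)

lemma exp_two_pi_I_mul (t : ℝ) :
    Complex.exp (2 * π * Complex.I * t) = Complex.exp ((2 * π * t : ℝ) * Complex.I) := by
  push_cast; ring_nf

lemma norm_exp_two_pi_I_mul (t : ℝ) : ‖Complex.exp (2 * π * Complex.I * t)‖ = 1 := by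
  rw [exp_two_pi_I_mul, Complex.norm_exp_ofReal_mul_I]

lemma hasSum_log_norm_one_sub_ofReal_mul_exp {r : ℝ} (hr : |r| < 1) (t : ℝ) :
    HasSum (fun n : ℕ => -(r ^ n * cos (2 * π * n * t) / n))
      (log ‖1 - r * Complex.exp (2 * π * Complex.I * t)‖) := by
  rw [exp_two_pi_I_mul]
  have hz : ‖(r : ℂ) * Complex.exp ((2 * π * t : ℝ) * Complex.I)‖ < 1 := by
    rwa [norm_mul, Complex.norm_exp_ofReal_mul_I, mul_one, Complex.norm_real, Real.norm_eq_abs]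
  have h := (Complex.hasSum_re (Complex.hasSum_taylorSeries_neg_log hz)).neg
  rw [Complex.neg_re, neg_neg, Complex.log_re] at h
  refine h.congr_fun fun n => ?_
  have hterm : ((r : ℂ) * Complex.exp ((2 * π * t : ℝ) * Complex.I)) ^ n / n
      = ((r ^ n / n : ℝ) : ℂ) * Complex.exp ((2 * π * n * t : ℝ) * Complex.I) := by
    rw [mul_pow, ← Complex.exp_nat_mul]
    push_cast
    ring_nf
  rw [hterm, Complex.re_ofReal_mul, Complex.exp_ofReal_mul_I_re]
  ring

lemma integral_cos_two_pi_mul_div (n : ℕ) :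
    ∫ t in (1 / 6 : ℝ)..(5 / 6), cos (2 * π * n * t) / n = -(sin (π * n / 3) / n ^ 2 / π) := by
  rcases eq_or_ne n 0 with rfl | hn
  · simp
  have hc : 2 * π * n ≠ 0 := by positivity
  rw [intervalIntegral.integral_div, intervalIntegral.integral_comp_mul_left (fun t => cos t) hc,
    integral_cos, show 2 * π * n * (5 / 6) = -(π * n / 3) + n * (2 * π) by ring,
    sin_add_nat_mul_two_pi, sin_neg, show 2 * π * n * (1 / 6) = π * n / 3 by ring, smul_eq_mul]
  field_simp
  ring

lemma hasSum_integral_log_norm_one_sub_ofReal_mul_exp {r : ℝ} (hr : |r| < 1) :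
    HasSum (fun n : ℕ => sin (π * n / 3) / n ^ 2 / π * r ^ n)
      (∫ t in (1 / 6 : ℝ)..(5 / 6), log ‖1 - r * Complex.exp (2 * π * Complex.I * t)‖) := by
  have h := hasSum_integral_of_dominated_convergence (μ := volume) (a := 1 / 6) (b := 5 / 6)
    (fun n _ => |r| ^ n) (fun n => (by fun_prop : Continuous _).aestronglyMeasurable)
    (fun n => ae_of_all _ fun t _ => ?_) (ae_of_all _ fun t _ => ?_) intervalIntegrable_const
    (ae_of_all _ fun t _ => hasSum_log_norm_one_sub_ofReal_mul_exp hr t)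
  · refine h.congr_fun fun n => ?_
    simp only [mul_div_assoc, intervalIntegral.integral_neg, intervalIntegral.integral_const_mul,
      integral_cos_two_pi_mul_div]
    ring
  · rw [norm_neg, norm_div, norm_mul, norm_pow, Real.norm_natCast, Real.norm_eq_abs]
    calc |r| ^ n * ‖cos (2 * π * n * t)‖ / n ≤ |r| ^ n * ‖cos (2 * π * n * t)‖ :=
          div_nat_le_self_of_nonnneg (by positivity) n
      _ ≤ |r| ^ n := mul_le_of_le_one_right (by positivity) (by simpa using abs_cos_le_one _)
  · exact summable_geometric_of_lt_one (abs_nonneg r) hr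

lemma abs_log_norm_one_sub_ofReal_mul_exp_le {r t : ℝ} (hr : r ∈ Icc (1 / 2) 1)
    (ht : t ∈ Icc (1 / 6) (5 / 6)) :
    |log ‖1 - r * Complex.exp (2 * π * Complex.I * t)‖| ≤ log 2 := by
  set z := Complex.exp (2 * π * Complex.I * t)
  have hz : ‖z‖ = 1 := norm_exp_two_pi_I_mul t
  have hlow : 1 / 2 ≤ ‖1 - r * z‖ := by
    have h := norm_sub_norm_le (1 - z) (1 - r * z)
    rw [show 1 - z - (1 - r * z) = ((r - 1 : ℝ) : ℂ) * z by push_cast; ring, norm_mul, hz,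
      Complex.norm_real, Real.norm_eq_abs, abs_of_nonpos (by linarith [hr.2]), norm_sub_rev] at h
    linarith [one_le_norm_exp_two_pi_I_mul_sub_one ht, hr.1]
  have hup : ‖1 - r * z‖ ≤ 2 := by
    calc ‖1 - r * z‖ ≤ ‖(1 : ℂ)‖ + ‖(r : ℂ) * z‖ := norm_sub_le _ _
      _ ≤ 2 := by
        rw [norm_one, norm_mul, hz, Complex.norm_real, Real.norm_eq_abs,
          abs_of_nonneg (by linarith [hr.1])]
        linarith [hr.2]
  rw [abs_le, ← log_inv]
  exact ⟨log_le_log (by norm_num) (by linarith), log_le_log (by linarith) hup⟩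

lemma tendsto_integral_log_norm_one_sub_ofReal_mul_exp :
    Tendsto (fun r : ℝ => ∫ t in (1 / 6 : ℝ)..(5 / 6),
        log ‖1 - r * Complex.exp (2 * π * Complex.I * t)‖) (𝓝[<] 1)
      (𝓝 (∫ t in (1 / 6 : ℝ)..(5 / 6), log ‖Complex.exp (2 * π * Complex.I * t) - 1‖)) := by
  have hr : ∀ᶠ r in 𝓝[<] (1 : ℝ), r ∈ Icc (1 / 2) 1 :=
    mem_of_superset (Ioo_mem_nhdsLT (by norm_num)) Ioo_subset_Icc_self
  have hIcc {t : ℝ} (ht : t ∈ uIoc (1 / 6 : ℝ) (5 / 6)) : t ∈ Icc (1 / 6 : ℝ) (5 / 6) := by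
    rw [uIoc_of_le (by norm_num)] at ht
    exact Ioc_subset_Icc_self ht
  refine tendsto_integral_filter_of_dominated_convergence (fun _ => log 2)
    (Eventually.of_forall fun r => (by fun_prop : Measurable _).aestronglyMeasurable)
    (hr.mono fun r hr => ae_of_all _ fun t ht =>
      abs_log_norm_one_sub_ofReal_mul_exp_le hr (hIcc ht))
    intervalIntegrable_const (ae_of_all _ fun t ht => ?_)
  have hne : ‖1 - ((1 : ℝ) : ℂ) * Complex.exp (2 * π * Complex.I * t)‖ ≠ 0 := by
    rw [Complex.ofReal_one, one_mul, norm_sub_rev]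
    linarith [one_le_norm_exp_two_pi_I_mul_sub_one (hIcc ht)]
  have hcont := ((by fun_prop : Continuous fun r : ℝ =>
    ‖1 - r * Complex.exp (2 * π * Complex.I * t)‖).continuousAt.log hne).tendsto
  rw [Complex.ofReal_one, one_mul, norm_sub_rev] at hcont
  exact hcont.mono_left nhdsWithin_le_nhds

lemma integral_log_norm_exp_two_pi_I_mul_sub_one :
    ∫ t in (1 / 6 : ℝ)..(5 / 6), log ‖Complex.exp (2 * π * Complex.I * t) - 1‖ =
      ∑' n : ℕ, sin (π * n / 3) / n ^ 2 / π := by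
  have hsum : Summable fun n : ℕ => sin (π * n / 3) / n ^ 2 / π :=
    (summable_div_sq_of_abs_le_one fun n => abs_sin_le_one _).div_const π
  have habel := Real.tendsto_tsum_powerSeries_nhdsWithin_lt hsum.hasSum.tendsto_sum_nat
  refine tendsto_nhds_unique tendsto_integral_log_norm_one_sub_ofReal_mul_exp (habel.congr' ?_)
  filter_upwards [Ioo_mem_nhdsLT (show (-1 : ℝ) < 1 by norm_num)] with r hr
  exact (hasSum_integral_log_norm_one_sub_ofReal_mul_exp (abs_lt.2 hr)).tsum_eq

/-- `∫₀¹ log⁺|e^{2πiθ} − 1| dθ = (3√3/(4π))·L(2, χ₃)`; consequently, for `P(z) = (z−1)^N`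
one has `h(P) = N·(3√3/(4π))·L(2, χ₃)`. -/
theorem stmt13 :
    (∫ t in (0:ℝ)..1,
        max (Real.log (‖Complex.exp (2 * Real.pi * Complex.I * t) - 1‖)) 0)
      = 3 * Real.sqrt 3 / (4 * Real.pi) * L2chi3 ∧
    ∀ N : ℕ,
      (∫ t in (0:ℝ)..1,
          max (Real.log (‖(Complex.exp (2 * Real.pi * Complex.I * t) - 1) ^ N‖ /
            Real.sqrt (‖((0:ℂ) - 1) ^ N‖))) 0)
        = N * (3 * Real.sqrt 3 / (4 * Real.pi) * L2chi3) := by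
  have hbase : ∫ t in (0 : ℝ)..1, max (log ‖Complex.exp (2 * π * Complex.I * t) - 1‖) 0
      = 3 * √3 / (4 * π) * L2chi3 := by
    simp only [max_comm _ (0 : ℝ), ← posLog_apply]
    rw [integral_posLog_norm_exp_two_pi_I_mul_sub_one, integral_log_norm_exp_two_pi_I_mul_sub_one,
      (hasSum_sin_pi_mul_div_three_div_sq.div_const π).tsum_eq]
    ring
  refine ⟨hbase, fun N => ?_⟩
  have hpow (t : ℝ) : max (log (‖(Complex.exp (2 * π * Complex.I * t) - 1) ^ N‖ /
      √‖((0 : ℂ) - 1) ^ N‖)) 0 = N * max (log ‖Complex.exp (2 * π * Complex.I * t) - 1‖) 0 := by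
    simp only [max_comm _ (0 : ℝ), ← posLog_apply]
    simp [norm_pow, posLog_pow]
  simp_rw [hpow, intervalIntegral.integral_const_mul, hbase]
end

section
/- Let 𝔊(x) = 2x/√(1 − 4x²) for |x| < 1/2 and 𝔊(x) = 0 for |x| ≥ 1/2. Then ∫_ℝ |𝔊(x)| dx = 1, and for every x with |x| ≠ 1/2 the principal value limit defining 𝓗(𝔊)(x) exists and equals −1 if |x| < 1/2, and −1 + 2|x|/√(4x² − 1) if |x| > 1/2. -/
/-!
After substituting `u = x - t`, the truncated integral becomes `∫_{|x - u| ≥ ε} 𝔊(u) / (x - u) du`.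
On `|u| < 1/2` one has `𝔊(u) / (x - u) = -2 / √(1 - 4u²) + 2x / ((x - u) √(1 - 4u²))`, and both
terms have elementary primitives: `-arcsin (2u)`, and for the Cauchy kernel a logarithm (Euler
substitution) when `|x| < 1/2`, an arcsine when `x > 1/2`. For `x > 1/2` the truncation is
eventually vacuous and the integral over `[-1/2, 1/2]` equals `π (-1 + 2x / √(4x² - 1))`. For
`|x| < 1/2` the logarithmic singularities at `x ∓ ε` cancel, leaving `-π` in the limit. Since `𝔊`
is odd, its Hilbert transform is even, which covers `x < -1/2`; and `∫ |𝔊| = 2 ∫₀^{1/2} 𝔊 = 1`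
because `-√(1 - 4u²) / 2` is a primitive of `𝔊`.
-/

open MeasureTheory Filter

/-- The magic odd function `𝔊(x) = 2x/√(1 − 4x²)` for `|x| < 1/2`, and `0` for `|x| ≥ 1/2`. -/
noncomputable def frakG (x : ℝ) : ℝ :=
  if |x| < 1/2 then 2 * x / Real.sqrt (1 - 4 * x ^ 2) else 0

open Set Real Topology

lemma measurableSet_le_abs_sub (ε x : ℝ) : MeasurableSet {u : ℝ | ε ≤ |x - u|} :=
  measurableSet_le measurable_const (by fun_prop)

lemma setIntegral_le_abs_div_comp_sub (F : ℝ → ℝ) (x ε : ℝ) :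
    ∫ t in {t : ℝ | ε ≤ |t|}, F (x - t) / t = ∫ u in {u : ℝ | ε ≤ |x - u|}, F u / (x - u) := by
  rw [← integral_indicator (by simpa using measurableSet_le_abs_sub ε 0),
    ← integral_indicator (measurableSet_le_abs_sub ε x),
    ← integral_sub_left_eq_self _ volume x]
  congr 1 with t
  simp only [indicator_apply, mem_ofPred_eq, sub_sub_cancel]

lemma pvHilbAt_neg_of_odd {F : ℝ → ℝ} (hF : ∀ u, F (-u) = -F u) {x L : ℝ}
    (h : pvHilbAt F x L) : pvHilbAt F (-x) L := by
  have hsym (ε : ℝ) : ∫ t in {t : ℝ | ε ≤ |t|}, F (-x - t) / t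
      = ∫ t in {t : ℝ | ε ≤ |t|}, F (x - t) / t := by
    have hmeas : MeasurableSet {t : ℝ | ε ≤ |t|} := by simpa using measurableSet_le_abs_sub ε 0
    rw [← integral_indicator hmeas, ← integral_indicator hmeas, ← integral_neg_eq_self]
    congr 1 with t
    simp only [indicator_apply, mem_ofPred_eq, abs_neg, sub_neg_eq_add, div_neg,
      show -x + t = -(x - t) by ring, hF, neg_div, neg_neg]
  unfold pvHilbAt at h ⊢
  simpa only [hsym] using h

lemma MeasureTheory.Integrable.integrableOn_div_sub_of_le_abs_sub {F : ℝ → ℝ}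
    (hF : Integrable F) {x δ : ℝ} (hδ : 0 < δ) {S : Set ℝ} (hS : MeasurableSet S)
    (hxS : ∀ u ∈ S, δ ≤ |x - u|) :
    IntegrableOn (fun u => F u / (x - u)) S := by
  refine Integrable.mono' (hF.norm.div_const δ).integrableOn
    (hF.aestronglyMeasurable.aemeasurable.div (by fun_prop : Measurable fun u => x - u).aemeasurable
      |>.aestronglyMeasurable.restrict)
    ((ae_restrict_iff' hS).2 (Eventually.of_forall fun u hu => ?_))
  rw [norm_div, Real.norm_eq_abs (x - u)]
  exact div_le_div_of_nonneg_left (norm_nonneg _) hδ (hxS u hu)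

lemma setIntegral_le_abs_sub_eq_intervalIntegral_add {f : ℝ → ℝ} {x ε a b : ℝ} (hε : 0 < ε)
    (ha : a ≤ x - ε) (hb : x + ε ≤ b) (hf : IntegrableOn f {u | ε ≤ |x - u|})
    (hfa : ∀ u ≤ a, f u = 0) (hfb : ∀ u, b < u → f u = 0) :
    ∫ u in {u | ε ≤ |x - u|}, f u = (∫ u in a..x - ε, f u) + ∫ u in x + ε..b, f u := by
  have hset : {u | ε ≤ |x - u|} = Iic (x - ε) ∪ Ici (x + ε) := by
    ext u
    simp only [mem_ofPred_eq, le_abs, mem_union, mem_Iic, mem_Ici]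
    constructor <;> rintro (h | h) <;> [left; right; left; right] <;> linarith
  rw [hset] at hf ⊢
  rw [setIntegral_union (Iic_disjoint_Ici.2 (by linarith)) measurableSet_Ici
      (hf.mono_set subset_union_left) (hf.mono_set subset_union_right),
    integral_Ici_eq_integral_Ioi, intervalIntegral.integral_of_le ha,
    intervalIntegral.integral_of_le hb,
    setIntegral_eq_of_subset_of_forall_sdiff_eq_zero measurableSet_Iic
      (Ioc_subset_Iic_self : Ioc a (x - ε) ⊆ _)
      fun u ⟨h₁, h₂⟩ => hfa u (not_lt.1 fun h => h₂ ⟨h, h₁⟩),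
    setIntegral_eq_of_subset_of_forall_sdiff_eq_zero measurableSet_Ioi
      (Ioc_subset_Ioi_self : Ioc (x + ε) b ⊆ _)
      fun u ⟨h₁, h₂⟩ => hfb u (not_le.1 fun h => h₂ ⟨h₁, h⟩)]

lemma frakG_of_abs_lt {u : ℝ} (hu : |u| < 1/2) : frakG u = 2 * u / √(1 - 4 * u ^ 2) := if_pos hu

lemma frakG_eq_zero_of_notMem_Ioo {u : ℝ} (hu : u ∉ Ioo (-(1/2)) (1/2)) : frakG u = 0 :=
  if_neg fun h => hu (abs_lt.1 h)

lemma frakG_neg (u : ℝ) : frakG (-u) = -frakG u := by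
  unfold frakG
  rw [abs_neg, neg_sq]
  split_ifs
  · ring
  · exact neg_zero.symm

lemma abs_frakG (u : ℝ) : |frakG u| = frakG |u| := by
  unfold frakG
  rw [abs_abs, sq_abs]
  split_ifs
  · rw [abs_div, abs_mul, abs_two, abs_of_nonneg (sqrt_nonneg _)]
  · exact abs_zero

lemma one_sub_four_mul_sq_pos {u : ℝ} (hu : |u| < 1/2) : 0 < 1 - 4 * u ^ 2 := by
  nlinarith [abs_lt.1 hu]

lemma hasDerivAt_sqrt_one_sub_four_mul_sq {u : ℝ} (hu : |u| < 1/2) :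
    HasDerivAt (fun u => √(1 - 4 * u ^ 2)) (-(4 * u) / √(1 - 4 * u ^ 2)) u := by
  refine (((hasDerivAt_pow 2 u).const_mul 4).const_sub 1
    |>.sqrt (one_sub_four_mul_sq_pos hu).ne').congr_deriv ?_
  field_simp
  ring

lemma hasDerivAt_sqrt_one_sub_four_mul_sq_div_two {u : ℝ} (hu : |u| < 1/2) :
    HasDerivAt (fun u => √(1 - 4 * u ^ 2) / 2) (-frakG u) u := by
  refine ((hasDerivAt_sqrt_one_sub_four_mul_sq hu).div_const 2).congr_deriv ?_
  rw [frakG_of_abs_lt hu]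
  ring

lemma frakG_nonneg {u : ℝ} (hu : 0 ≤ u) : 0 ≤ frakG u := by
  unfold frakG
  split_ifs <;> positivity

lemma integrable_frakG : Integrable frakG := by
  have hcont : ContinuousOn (fun u : ℝ => √(1 - 4 * u ^ 2) / 2) univ := by fun_prop
  have hderiv (u : ℝ) (hu : u ∈ Ioo (-(1/2) : ℝ) (1/2)) :=
    hasDerivAt_sqrt_one_sub_four_mul_sq_div_two (abs_lt.2 hu)
  have hleft : IntegrableOn frakG (Ioc (-(1/2)) 0) := by
    refine (intervalIntegral.integrableOn_deriv_of_nonneg (hcont.mono (subset_univ _))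
      (fun u hu => hderiv u ⟨hu.1, by linarith [hu.2]⟩) fun u hu => ?_).neg.congr_fun
      (fun u _ => neg_neg _) measurableSet_Ioc
    simpa [frakG_neg] using frakG_nonneg (neg_nonneg.2 hu.2.le)
  have hright : IntegrableOn frakG (Ioc 0 (1/2)) :=
    intervalIntegral.integrableOn_deriv_of_nonneg (hcont.neg.mono (subset_univ _))
      (fun u hu => (hderiv u ⟨by linarith [hu.1], hu.2⟩).neg.congr_deriv (neg_neg _))
      fun u hu => frakG_nonneg hu.1.le
  have hunion := hleft.union hright
  rw [Ioc_union_Ioc_eq_Ioc (by norm_num) (by norm_num)] at hunion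
  exact hunion.integrable_of_forall_notMem_eq_zero fun u hu =>
    frakG_eq_zero_of_notMem_Ioo fun h => hu ⟨h.1, h.2.le⟩

lemma integral_frakG_zero_half : ∫ u in (0 : ℝ)..1/2, frakG u = 1/2 := by
  rw [intervalIntegral.integral_eq_sub_of_hasDerivAt_of_le (f := fun u => -(√(1 - 4 * u ^ 2) / 2))
    (by norm_num) (by fun_prop)
    (fun u hu => (hasDerivAt_sqrt_one_sub_four_mul_sq_div_two
      (abs_lt.2 ⟨by linarith [hu.1], hu.2⟩)).neg.congr_deriv (neg_neg _))
    integrable_frakG.intervalIntegrable]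
  norm_num

lemma integral_abs_frakG : ∫ u, |frakG u| = 1 := by
  simp_rw [abs_frakG]
  rw [integral_comp_abs, setIntegral_eq_of_subset_of_forall_sdiff_eq_zero measurableSet_Ioi
      (Ioc_subset_Ioi_self : Ioc (0 : ℝ) (1/2) ⊆ _)
      fun u ⟨h₁, h₂⟩ => frakG_eq_zero_of_notMem_Ioo fun h => h₂ ⟨h₁, h.2.le⟩,
    ← intervalIntegral.integral_of_le (by norm_num), integral_frakG_zero_half]
  norm_num

lemma hasDerivAt_arcsin_two_mul {u : ℝ} (hu : |u| < 1/2) :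
    HasDerivAt (fun u => arcsin (2 * u)) (2 / √(1 - 4 * u ^ 2)) u := by
  have h := abs_lt.1 hu
  have h2 : HasDerivAt (fun u : ℝ => 2 * u) 2 u := by
    simpa using (hasDerivAt_id u).const_mul (2 : ℝ)
  refine ((hasDerivAt_arcsin (by linarith) (by linarith)).comp u h2).congr_deriv ?_
  rw [mul_pow, one_div_mul_eq_div]
  norm_num

noncomputable def cauchyLogArg (x u : ℝ) : ℝ := 1 - 4 * x * u + √(1 - 4 * x ^ 2) * √(1 - 4 * u ^ 2)

noncomputable def cauchyPrimInside (x u : ℝ) : ℝ :=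
  (log (cauchyLogArg x u) - log (x - u)) / √(1 - 4 * x ^ 2)

noncomputable def cauchyPrimOutside (x u : ℝ) : ℝ :=
  -arcsin ((1 - 4 * x * u) / (2 * x - 2 * u)) / √(4 * x ^ 2 - 1)

lemma cauchyLogArg_pos {x u : ℝ} (hx : |x| < 1/2) (hu : |u| ≤ 1/2) : 0 < cauchyLogArg x u := by
  unfold cauchyLogArg
  have : |4 * x * u| < 1 := by
    rw [abs_mul, abs_mul, abs_of_pos four_pos]
    nlinarith [abs_nonneg x, abs_nonneg u]
  nlinarith [abs_lt.1 this, mul_nonneg (sqrt_nonneg (1 - 4 * x ^ 2)) (sqrt_nonneg (1 - 4 * u ^ 2))]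

lemma hasDerivAt_cauchyPrimInside {x u : ℝ} (hx : |x| < 1/2) (hu : |u| < 1/2) (hxu : x ≠ u) :
    HasDerivAt (cauchyPrimInside x) (1 / ((x - u) * √(1 - 4 * u ^ 2))) u := by
  set b := √(1 - 4 * x ^ 2)
  set s := √(1 - 4 * u ^ 2)
  have hb : 0 < b := sqrt_pos.2 (one_sub_four_mul_sq_pos hx)
  have hs : 0 < s := sqrt_pos.2 (one_sub_four_mul_sq_pos hu)
  have hb2 : b ^ 2 = 1 - 4 * x ^ 2 := sq_sqrt (one_sub_four_mul_sq_pos hx).le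
  have hs2 : s ^ 2 = 1 - 4 * u ^ 2 := sq_sqrt (one_sub_four_mul_sq_pos hu).le
  have hN : 0 < 1 - 4 * x * u + b * s := cauchyLogArg_pos hx hu.le
  have hxu' : x - u ≠ 0 := sub_ne_zero.2 hxu
  have hN' : HasDerivAt (cauchyLogArg x) (-(4 * x) + b * (-(4 * u) / s)) u :=
    (((hasDerivAt_id u).const_mul (4 * x)).const_sub 1).add
      ((hasDerivAt_sqrt_one_sub_four_mul_sq hu).const_mul b) |>.congr_deriv (by rw [mul_one])
  have hlog : HasDerivAt (fun u => log (x - u)) (-1 / (x - u)) u :=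
    ((hasDerivAt_id u).const_sub x).log hxu'
  refine ((hN'.log hN.ne').sub hlog).div_const b |>.congr_deriv ?_
  rw [show cauchyLogArg x u = 1 - 4 * x * u + b * s from rfl]
  field_simp
  linear_combination b * hs2 - s * hb2

lemma hasDerivAt_cauchyPrimOutside {x u : ℝ} (hx : 1/2 < x) (hu : |u| < 1/2) :
    HasDerivAt (cauchyPrimOutside x) (1 / ((x - u) * √(1 - 4 * u ^ 2))) u := by
  have hu' := abs_lt.1 hu
  set D := √(4 * x ^ 2 - 1)
  set s := √(1 - 4 * u ^ 2)
  have hD : 0 < D := sqrt_pos.2 (by nlinarith)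
  have hs : 0 < s := sqrt_pos.2 (one_sub_four_mul_sq_pos hu)
  have hD2 : D ^ 2 = 4 * x ^ 2 - 1 := sq_sqrt (by nlinarith)
  have hs2 : s ^ 2 = 1 - 4 * u ^ 2 := sq_sqrt (one_sub_four_mul_sq_pos hu).le
  have hd : 0 < 2 * x - 2 * u := by linarith
  have hxu : x - u ≠ 0 := by linarith
  set w := (1 - 4 * x * u) / (2 * x - 2 * u) with hw_def
  have hsqrt : √(1 - w ^ 2) = D * s / (2 * x - 2 * u) := by
    rw [← sqrt_sq (by positivity : 0 ≤ D * s / (2 * x - 2 * u)), hw_def]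
    congr 1
    field_simp
    linear_combination (-(s ^ 2)) * hD2 - (4 * x ^ 2 - 1) * hs2
  have hw1 : w ^ 2 < 1 := by
    have := sqrt_pos.1 (hsqrt ▸ (by positivity : 0 < D * s / (2 * x - 2 * u)))
    linarith
  have hw : HasDerivAt (fun u => (1 - 4 * x * u) / (2 * x - 2 * u))
      ((-(4 * x) * (2 * x - 2 * u) - (1 - 4 * x * u) * (-2)) / (2 * x - 2 * u) ^ 2) u := by
    refine ((((hasDerivAt_id u).const_mul (4 * x)).const_sub 1).div
      (((hasDerivAt_id u).const_mul 2).const_sub (2 * x)) hd.ne').congr_deriv ?_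
    simp
  refine (((hasDerivAt_arcsin ?_ ?_).comp u hw).neg.div_const D).congr_deriv ?_
  · nlinarith
  · nlinarith
  · rw [hsqrt]
    field_simp
    linear_combination -hD2

noncomputable def frakGDivSubPrim (K : ℝ → ℝ) (x u : ℝ) : ℝ := -arcsin (2 * u) + 2 * x * K u

lemma hasDerivAt_frakGDivSubPrim {K : ℝ → ℝ} {x u : ℝ} (hu : |u| < 1/2) (hxu : x ≠ u)
    (hK : HasDerivAt K (1 / ((x - u) * √(1 - 4 * u ^ 2))) u) :
    HasDerivAt (frakGDivSubPrim K x) (frakG u / (x - u)) u := by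
  have hs : 0 < √(1 - 4 * u ^ 2) := sqrt_pos.2 (one_sub_four_mul_sq_pos hu)
  have hxu' : x - u ≠ 0 := sub_ne_zero.2 hxu
  refine ((hasDerivAt_arcsin_two_mul hu).neg.add (hK.const_mul (2 * x))).congr_deriv ?_
  rw [frakG_of_abs_lt hu]
  field_simp
  ring

lemma integral_frakG_div_sub_eq {K : ℝ → ℝ} {x a b δ : ℝ} (hab : a ≤ b) (ha : -(1/2) ≤ a)
    (hb : b ≤ 1/2) (hδ : 0 < δ) (hdist : ∀ u ∈ Icc a b, δ ≤ |x - u|)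
    (hK : ContinuousOn K (Icc a b))
    (hK' : ∀ u ∈ Ioo a b, HasDerivAt K (1 / ((x - u) * √(1 - 4 * u ^ 2))) u) :
    ∫ u in a..b, frakG u / (x - u) = frakGDivSubPrim K x b - frakGDivSubPrim K x a := by
  have hint : IntervalIntegrable (fun u => frakG u / (x - u)) volume a b :=
    (intervalIntegrable_iff_integrableOn_Ioc_of_le hab).2
      (integrable_frakG.integrableOn_div_sub_of_le_abs_sub hδ measurableSet_Ioc
        fun u hu => hdist u (Ioc_subset_Icc_self hu))
  refine intervalIntegral.integral_eq_sub_of_hasDerivAt_of_le hab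
    (((continuous_arcsin.comp (continuous_const.mul continuous_id)).neg.continuousOn).add
      (continuousOn_const.mul hK))
    (fun u hu => hasDerivAt_frakGDivSubPrim (abs_lt.2 ⟨by linarith [hu.1], by linarith [hu.2]⟩)
      (fun h => (hdist u (Ioo_subset_Icc_self hu)).not_gt (by simpa [h] using hδ)) (hK' u hu)) hint

lemma frakGDivSubPrim_half_sub_neg_half (K : ℝ → ℝ) (x : ℝ) :
    frakGDivSubPrim K x (1/2) - frakGDivSubPrim K x (-(1/2))
      = -π + 2 * x * (K (1/2) - K (-(1/2))) := by
  rw [frakGDivSubPrim, frakGDivSubPrim, show (2 : ℝ) * (1/2) = 1 by norm_num,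
    show (2 : ℝ) * -(1/2) = -1 by norm_num, arcsin_one, arcsin_neg_one]
  ring

lemma continuous_cauchyLogArg (x : ℝ) : Continuous (cauchyLogArg x) := by
  unfold cauchyLogArg
  fun_prop

lemma continuousOn_cauchyPrimInside {x : ℝ} (hx : |x| < 1/2) {S : Set ℝ}
    (hS : S ⊆ Icc (-(1/2)) (1/2)) (hxS : x ∉ S) : ContinuousOn (cauchyPrimInside x) S := by
  refine ((ContinuousOn.log (continuous_cauchyLogArg x).continuousOn fun u hu => ?_).sub
    (ContinuousOn.log (by fun_prop) fun u hu => sub_ne_zero.2 (by rintro rfl; exact hxS hu)))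
    |>.div_const _
  exact (cauchyLogArg_pos hx (abs_le.2 (hS hu))).ne'

lemma continuousOn_cauchyPrimOutside {x : ℝ} (hx : 1/2 < x) :
    ContinuousOn (cauchyPrimOutside x) (Icc (-(1/2)) (1/2)) :=
  (continuous_arcsin.comp_continuousOn (ContinuousOn.div (by fun_prop) (by fun_prop)
    fun u hu => by linarith [hu.2])).neg.div_const _

lemma cauchyPrimInside_half_sub_neg_half {x : ℝ} (hx : |x| < 1/2) :
    cauchyPrimInside x (1/2) - cauchyPrimInside x (-(1/2)) = 0 := by
  have hx' := abs_lt.1 hx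
  have h₁ : cauchyLogArg x (1/2) = 2 * (1/2 - x) := by norm_num [cauchyLogArg]; ring
  have h₂ : cauchyLogArg x (-(1/2)) = 2 * (x + 1/2) := by norm_num [cauchyLogArg]; ring
  rw [cauchyPrimInside, cauchyPrimInside, h₁, h₂, show x - 1/2 = -(1/2 - x) by ring,
    show x - -(1/2) = x + 1/2 by ring, log_neg_eq_log, log_mul two_ne_zero (by linarith),
    log_mul two_ne_zero (by linarith)]
  ring

lemma cauchyPrimOutside_half_sub_neg_half {x : ℝ} (hx : 1/2 < x) :
    cauchyPrimOutside x (1/2) - cauchyPrimOutside x (-(1/2)) = π / √(4 * x ^ 2 - 1) := by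
  have h₁ : (1 - 4 * x * (1/2)) / (2 * x - 2 * (1/2)) = -1 := by
    rw [div_eq_iff (by linarith)]; ring
  have h₂ : (1 - 4 * x * (-(1/2))) / (2 * x - 2 * (-(1/2))) = 1 := by
    rw [div_eq_iff (by linarith)]; ring
  simp only [cauchyPrimOutside, h₁, h₂, arcsin_one, arcsin_neg_one]
  ring

lemma tendsto_frakGDivSubPrim_cauchyPrimInside_sub {x : ℝ} (hx : |x| < 1/2) :
    Tendsto (fun ε => frakGDivSubPrim (cauchyPrimInside x) x (x - ε)
      - frakGDivSubPrim (cauchyPrimInside x) x (x + ε)) (𝓝 0) (𝓝 0) := by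
  have hcont : ContinuousAt (fun ε => -arcsin (2 * (x - ε)) + arcsin (2 * (x + ε))
      + 2 * x * ((log (cauchyLogArg x (x - ε)) - log (cauchyLogArg x (x + ε)))
        / √(1 - 4 * x ^ 2))) 0 := by
    have hN := continuous_cauchyLogArg x
    fun_prop (disch := simpa using (cauchyLogArg_pos hx hx.le).ne')
  convert hcont.tendsto using 2 with ε
  -- the singular terms `log (x - (x ∓ ε)) = log |ε|` cancel
  · simp only [frakGDivSubPrim, cauchyPrimInside, sub_sub_cancel, sub_add_cancel_left,
      log_neg_eq_log]
    ring
  · simp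

lemma integral_frakG_div_sub_of_abs_lt {x a b δ : ℝ} (hx : |x| < 1/2) (hab : a ≤ b)
    (ha : -(1/2) ≤ a) (hb : b ≤ 1/2) (hδ : 0 < δ) (hdist : ∀ u ∈ Icc a b, δ ≤ |x - u|) :
    ∫ u in a..b, frakG u / (x - u)
      = frakGDivSubPrim (cauchyPrimInside x) x b - frakGDivSubPrim (cauchyPrimInside x) x a := by
  have hne (u : ℝ) (hu : u ∈ Icc a b) : x ≠ u :=
    fun h => (hdist u hu).not_gt (by simpa [h] using hδ)
  exact integral_frakG_div_sub_eq hab ha hb hδ hdist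
    (continuousOn_cauchyPrimInside hx (Icc_subset_Icc ha hb) fun h => hne x h rfl)
    fun u hu => hasDerivAt_cauchyPrimInside hx
      (abs_lt.2 ⟨by linarith [hu.1], by linarith [hu.2]⟩) (hne u (Ioo_subset_Icc_self hu))

lemma setIntegral_le_abs_sub_frakG_div_sub_of_abs_lt {x ε : ℝ} (hx : |x| < 1/2) (hε : 0 < ε)
    (hεl : ε < x + 1/2) (hεr : ε < 1/2 - x) :
    ∫ u in {u | ε ≤ |x - u|}, frakG u / (x - u)
      = -π + (frakGDivSubPrim (cauchyPrimInside x) x (x - ε)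
        - frakGDivSubPrim (cauchyPrimInside x) x (x + ε)) := by
  rw [setIntegral_le_abs_sub_eq_intervalIntegral_add hε (a := -(1/2)) (b := 1/2)
      (by linarith) (by linarith)
      (integrable_frakG.integrableOn_div_sub_of_le_abs_sub hε (measurableSet_le_abs_sub ε x)
        fun u hu => hu)
      (fun u hu => by rw [frakG_eq_zero_of_notMem_Ioo fun h => by linarith [h.1], zero_div])
      (fun u hu => by rw [frakG_eq_zero_of_notMem_Ioo fun h => by linarith [h.2], zero_div]),
    integral_frakG_div_sub_of_abs_lt hx (by linarith) le_rfl (by linarith) hε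
      fun u hu => le_abs.2 (Or.inl (by linarith [hu.2])),
    integral_frakG_div_sub_of_abs_lt hx (by linarith) (by linarith) le_rfl hε
      fun u hu => le_abs.2 (Or.inr (by linarith [hu.1]))]
  linear_combination frakGDivSubPrim_half_sub_neg_half (cauchyPrimInside x) x
    + 2 * x * cauchyPrimInside_half_sub_neg_half hx

lemma pvHilbAt_frakG_of_abs_lt {x : ℝ} (hx : |x| < 1/2) : pvHilbAt frakG x (-1) := by
  have hx' := abs_lt.1 hx
  have hlim := ((tendsto_frakGDivSubPrim_cauchyPrimInside_sub hx).const_add (-π)).const_mul (1 / π)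
  rw [add_zero, one_div_mul_eq_div, neg_div_self pi_ne_zero] at hlim
  unfold pvHilbAt
  simp_rw [setIntegral_le_abs_div_comp_sub]
  refine (hlim.mono_left nhdsWithin_le_nhds).congr' ?_
  filter_upwards [Ioo_mem_nhdsGT (lt_min (by linarith : (0 : ℝ) < x + 1/2)
    (by linarith : (0 : ℝ) < 1/2 - x))] with ε ⟨hε, hεx⟩
  rw [lt_min_iff] at hεx
  rw [setIntegral_le_abs_sub_frakG_div_sub_of_abs_lt hx hε hεx.1 hεx.2]

lemma pvHilbAt_frakG_of_half_lt {x : ℝ} (hx : 1/2 < x) :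
    pvHilbAt frakG x (-1 + 2 * x / √(4 * x ^ 2 - 1)) := by
  have hdist {δ : ℝ} (hδ : δ ≤ x - 1/2) (u : ℝ) (hu : u ≤ 1/2) : δ ≤ |x - u| :=
    le_abs.2 (Or.inl (by linarith))
  have hval : ∫ u in (-(1/2))..1/2, frakG u / (x - u)
      = π * (-1 + 2 * x / √(4 * x ^ 2 - 1)) := by
    rw [integral_frakG_div_sub_eq (by norm_num) le_rfl le_rfl (by linarith : 0 < x - 1/2)
      (fun u hu => hdist le_rfl u hu.2) (continuousOn_cauchyPrimOutside hx)
      (fun u hu => hasDerivAt_cauchyPrimOutside hx (abs_lt.2 hu)),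
      frakGDivSubPrim_half_sub_neg_half, cauchyPrimOutside_half_sub_neg_half hx]
    ring
  unfold pvHilbAt
  simp_rw [setIntegral_le_abs_div_comp_sub]
  refine tendsto_const_nhds.congr' ?_
  filter_upwards [Ioo_mem_nhdsGT (by linarith : (0 : ℝ) < x - 1/2)] with ε hε
  rw [setIntegral_eq_of_subset_of_forall_sdiff_eq_zero (measurableSet_le_abs_sub ε x)
      (fun u (hu : u ∈ Ioc (-(1/2)) (1/2)) => hdist hε.2.le u hu.2) fun u hu => by
        rw [frakG_eq_zero_of_notMem_Ioo fun h => hu.2 ⟨h.1, h.2.le⟩, zero_div],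
    ← intervalIntegral.integral_of_le (by norm_num), hval]
  field_simp

/-- `∫|𝔊| = 1`, and for every `x` with `|x| ≠ 1/2` the principal value limit defining
`𝓗(𝔊)(x)` exists and equals `−1` if `|x| < 1/2` and `−1 + 2|x|/√(4x² − 1)` if `|x| > 1/2`. -/
theorem stmt14 :
    (∫ x : ℝ, |frakG x|) = 1 ∧
    ∀ x : ℝ, |x| ≠ 1/2 →
      pvHilbAt frakG x
        (if |x| < 1/2 then -1 else -1 + 2 * |x| / Real.sqrt (4 * x ^ 2 - 1)) := by
  refine ⟨integral_abs_frakG, fun x hx => ?_⟩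
  rcases hx.lt_or_gt with hlt | hgt
  · rw [if_pos hlt]
    exact pvHilbAt_frakG_of_abs_lt hlt
  · rw [if_neg hgt.not_gt]
    have h := pvHilbAt_frakG_of_half_lt hgt
    rw [sq_abs] at h
    rcases abs_choice x with hax | hax
    · rwa [hax] at h ⊢
    · simpa only [hax, neg_neg] using pvHilbAt_neg_of_odd frakG_neg h
end
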